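/- Let D ≥ 0 be any real number. Define T^3_D := { x ∈ ℝ^N : code_N(x) is not semi (D/N)-random }. Then T^3_D is a Borel set and ℋ^D(T^3_D) = 0, where ℋ^D is D-dimensional Hausdorff outer measure on ℝ^N. -/

import Mathlib

open scoped ENNReal MeasureTheory

/-- Finite binary strings. -/
abbrev BStr := List Bool

/-- A set of strings is prefix-free if no element is a proper prefix of another element. -/
def PrefixFree (S : Set BStr) : Prop :=
  ∀ p ∈ S, ∀ q ∈ S, p <+: q → p = q

/-- A computer: a partial recursive function on finite binary strings
whose domain is a prefix-free set. -/
structure Computer where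
  f : BStr →. BStr
  partrec : Partrec f
  prefixFree : PrefixFree f.Dom

/-- `U` is a universal computer: for every computer `C` there is a simulation
constant `sim` such that whenever `C p` is defined there is `q` with
`U q = C p` and `|q| ≤ |p| + sim`. -/
def IsUniversal (U : Computer) : Prop :=
  ∀ C : Computer, ∃ sim : ℕ, ∀ p y : BStr, C.f p = Part.some y →
    ∃ q : BStr, U.f q = Part.some y ∧ q.length ≤ p.length + sim

/-- Kolmogorov complexity relative to a computer `U`:
minimal length of a program producing `s`. -/
noncomputable def Kc (U : Computer) (s : BStr) : ℕ :=
  sInf { k | ∃ p : BStr, U.f p = Part.some s ∧ p.length = k }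

/-- The prefix of length `n` of an infinite binary sequence. -/
def pre (α : ℕ → Bool) (n : ℕ) : BStr := (List.range n).map α

/-- A real number is computable if the base-two expansion of `D mod 1` is
generated by a total recursive function. -/
def ComputableReal (D : ℝ) : Prop :=
  ∃ f : ℕ → Bool, Computable f ∧
    Int.fract D = ∑' n : ℕ, (if f n then (1 : ℝ) else 0) / 2 ^ (n + 1)

/-- `α` is weakly Chaitin `D`-random: `∃ c, ∀ n, D·n − c ≤ H(α_n)`. -/
def WeaklyChaitinRandom (U : Computer) (D : ℝ) (α : ℕ → Bool) : Prop :=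
  ∃ c : ℝ, ∀ n : ℕ, D * n - c ≤ (Kc U (pre α n) : ℝ)

/-- `α` is Chaitin `D`-random: `H(α_n) − D·n → ∞`. -/
def ChaitinRandom (U : Computer) (D : ℝ) (α : ℕ → Bool) : Prop :=
  Filter.Tendsto (fun n : ℕ => (Kc U (pre α n) : ℝ) - D * n) Filter.atTop Filter.atTop

/-- `α` is semi `D`-random: `D ≤ liminf H(α_n)/n`. -/
def SemiRandom (U : Computer) (D : ℝ) (α : ℕ → Bool) : Prop :=
  D ≤ Filter.liminf (fun n : ℕ => (Kc U (pre α n) : ℝ) / n) Filter.atTop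

/-- `α` is `D`-compressible: `limsup H(α_n)/n ≤ D`. -/
def Compressible (U : Computer) (D : ℝ) (α : ℕ → Bool) : Prop :=
  Filter.limsup (fun n : ℕ => (Kc U (pre α n) : ℝ) / n) Filter.atTop ≤ D

/-- A Martin-Löf `D`-test: an r.e. subset `T` of `ℕ × X` with
`Σ_{s ∈ T_i} 2^{−D|s|} ≤ 2^{−i}` for every `i`. -/
def MLTest (D : ℝ) (T : Set (ℕ × BStr)) : Prop :=
  REPred (· ∈ T) ∧
    ∀ i : ℕ, (∑' s : { s : BStr // (i, s) ∈ T }, (2 : ℝ≥0∞) ^ (-(D * (s.1.length : ℝ))))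
      ≤ (2 : ℝ≥0∞) ^ (-(i : ℝ))

/-- `α` is Martin-Löf `D`-random: for every Martin-Löf `D`-test there is a
level `i` such that no prefix of `α` lies in `T_i`. -/
def MLRandom (D : ℝ) (α : ℕ → Bool) : Prop :=
  ∀ T : Set (ℕ × BStr), MLTest D T → ∃ i : ℕ, ∀ n : ℕ, (i, pre α n) ∉ T

/-- A Solovay `D`-test: an r.e. subset `T` of `ℕ × X` with
`Σ_{(i,s) ∈ T} 2^{−D|s|} < ∞`. -/
def SolovayTest (D : ℝ) (T : Set (ℕ × BStr)) : Prop :=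
  REPred (· ∈ T) ∧
    (∑' x : T, (2 : ℝ≥0∞) ^ (-(D * ((x : ℕ × BStr).2.length : ℝ)))) < ⊤

/-- `α` is Solovay `D`-random: for every Solovay `D`-test, only finitely many
levels `i` contain a prefix of `α`. -/
def SolovayRandom (D : ℝ) (α : ℕ → Bool) : Prop :=
  ∀ T : Set (ℕ × BStr), SolovayTest D T →
    ∃ m : ℕ, ∀ i > m, ∀ n : ℕ, (i, pre α n) ∉ T

/-- The generalized halting probability `Ω^D = Σ_{p ∈ dom U} 2^{−|p|/D}`. -/
noncomputable def OmegaD (U : Computer) (D : ℝ) : ℝ :=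
  ∑' p : U.f.Dom, (2 : ℝ) ^ (-((p : BStr).length : ℝ) / D)

/-- The `n`-th digit (starting from `n = 0`) of the base-two expansion of
`x mod 1`, chosen with infinitely many zeros (the non-terminating-in-ones
expansion). -/
noncomputable def binExp (x : ℝ) (n : ℕ) : Bool :=
  decide (⌊Int.fract x * 2 ^ (n + 1)⌋ % 2 = 1)

/-- `code_N(x)`: the infinite binary sequence obtained by interleaving the
base-two expansions (with infinitely many zeros) of the fractional parts of
the `N` coordinates of `x`. -/
noncomputable def codeSeq (N : ℕ) (hN : 0 < N) (x : EuclideanSpace ℝ (Fin N)) (n : ℕ) : Bool :=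
  binExp (x ⟨n % N, Nat.mod_lt n hN⟩) (n / N)

/-- `D` is the 1st algorithmic dimension of `F ⊆ ℝ^N`. -/
def IsDimA1 (U : Computer) (N : ℕ) (hN : 0 < N) (F : Set (EuclideanSpace ℝ (Fin N)))
    (D : ℝ) : Prop :=
  (∀ x ∈ F, Compressible U (D / N) (codeSeq N hN x)) ∧
    ∃ x ∈ F, ChaitinRandom U (D / N) (codeSeq N hN x)

/-- `D` is the 2nd algorithmic dimension of `F ⊆ ℝ^N`. -/
def IsDimA2 (U : Computer) (N : ℕ) (hN : 0 < N) (F : Set (EuclideanSpace ℝ (Fin N)))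
    (D : ℝ) : Prop :=
  (∀ x ∈ F, Compressible U (D / N) (codeSeq N hN x)) ∧
    ∃ x ∈ F, WeaklyChaitinRandom U (D / N) (codeSeq N hN x)

/-- `D` is the 3rd algorithmic dimension of `F ⊆ ℝ^N`. -/
def IsDimA3 (U : Computer) (N : ℕ) (hN : 0 < N) (F : Set (EuclideanSpace ℝ (Fin N)))
    (D : ℝ) : Prop :=
  (∀ x ∈ F, Compressible U (D / N) (codeSeq N hN x)) ∧
    ∃ x ∈ F, SemiRandom U (D / N) (codeSeq N hN x)

/-- `D` is the 4th algorithmic dimension of `F ⊆ ℝ^N`. -/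
def IsDimA4 (U : Computer) (N : ℕ) (hN : 0 < N) (F : Set (EuclideanSpace ℝ (Fin N)))
    (D : ℝ) : Prop :=
  (∀ x ∈ F, Compressible U (D / N) (codeSeq N hN x)) ∧
    ∀ d : ℝ, d < D / N → ∃ x ∈ F, ChaitinRandom U d (codeSeq N hN x)

/-- One-dimensional versions of the algorithmic dimensions, for `F ⊆ ℝ`,
where a real `x` is identified with the base-two expansion of `x mod 1`. -/
def IsDimA1R (U : Computer) (F : Set ℝ) (D : ℝ) : Prop :=
  (∀ x ∈ F, Compressible U D (binExp x)) ∧ ∃ x ∈ F, ChaitinRandom U D (binExp x)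

def IsDimA2R (U : Computer) (F : Set ℝ) (D : ℝ) : Prop :=
  (∀ x ∈ F, Compressible U D (binExp x)) ∧ ∃ x ∈ F, WeaklyChaitinRandom U D (binExp x)

def IsDimA3R (U : Computer) (F : Set ℝ) (D : ℝ) : Prop :=
  (∀ x ∈ F, Compressible U D (binExp x)) ∧ ∃ x ∈ F, SemiRandom U D (binExp x)

def IsDimA4R (U : Computer) (F : Set ℝ) (D : ℝ) : Prop :=
  (∀ x ∈ F, Compressible U D (binExp x)) ∧
    ∀ d : ℝ, d < D → ∃ x ∈ F, ChaitinRandom U d (binExp x)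

/-- The real number `0.s` determined by a finite binary string `s`. -/
noncomputable def strVal : BStr → ℝ
  | [] => 0
  | b :: t => ((if b then 1 else 0) + strVal t) / 2

/-- The real number `0.q₀q₁q₂⋯` obtained by concatenating the strings
`q 0, q 1, q 2, …` after the binary point. -/
noncomputable def concatVal (q : ℕ → BStr) : ℝ :=
  ∑' i : ℕ, strVal (q i) * (2 : ℝ) ^ (-(∑ j ∈ Finset.range i, (q j).length : ℤ))

/-- The halting self-similar set `F_halt`. -/
def Fhalt (U : Computer) : Set ℝ :=
  { x | ∃ q : ℕ → BStr, (∀ i, q i ∈ U.f.Dom) ∧ x = concatVal q }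

/-- The set `F_opt(f, W)` for an optimal code `f`. -/
def Fopt (f : BStr → BStr) (W : Set BStr) : Set ℝ :=
  { x | ∃ s : ℕ → BStr, (∀ i, s i ∈ W) ∧ x = concatVal fun i => f (s i) }

/-- The set `F_halt(W)`. -/
def FhaltW (U : Computer) (W : Set BStr) : Set ℝ :=
  { x | ∃ q : ℕ → BStr, (∀ i, ∃ w ∈ W, U.f (q i) = Part.some w) ∧ x = concatVal q }

/-- The dyadic interval `I(s) = [0.s, 0.s + 2^{−|s|})`. -/
def Ival (s : BStr) : Set ℝ :=
  Set.Ico (strVal s) (strVal s + 2 ^ (-(s.length : ℤ)))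

/-- The enlarged interval `Î(s) = [0.s − 2^{−|s|}, 0.s + 2·2^{−|s|}) mod 1`. -/
def IvalHat (s : BStr) : Set ℝ :=
  Int.fract '' Set.Ico (strVal s - 2 ^ (-(s.length : ℤ)))
    (strVal s + 2 * 2 ^ (-(s.length : ℤ)))

/-- `𝔐(F)`: tuples of equal-length strings whose dyadic box meets `F mod 1`. -/
def MM (N : ℕ) (F : Set (EuclideanSpace ℝ (Fin N))) : Set (Fin N → BStr) :=
  { s | (∀ i j, (s i).length = (s j).length) ∧
      ∃ x ∈ F, ∀ i, Int.fract (x i) ∈ Ival (s i) }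

/-- `𝔐̂(F)`: tuples of equal-length strings whose enlarged box meets `F mod 1`. -/
def MMhat (N : ℕ) (F : Set (EuclideanSpace ℝ (Fin N))) : Set (Fin N → BStr) :=
  { s | (∀ i j, (s i).length = (s j).length) ∧
      ∃ x ∈ F, ∀ i, Int.fract (x i) ∈ IvalHat (s i) }

/-- `F` satisfies the r.e. condition: some r.e. set `L` is squeezed between
`𝔐(F)` and `𝔐̂(F)`. -/
def REcond (N : ℕ) (F : Set (EuclideanSpace ℝ (Fin N))) : Prop :=
  ∃ L : Set (Fin N → BStr), REPred (· ∈ L) ∧ MM N F ⊆ L ∧ L ⊆ MMhat N F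

/-- `N_δ(F)`: the smallest number of closed balls of radius `δ` that cover `F`. -/
noncomputable def coverNum {X : Type*} [MetricSpace X] (F : Set X) (δ : ℝ) : ℕ :=
  sInf { m | ∃ t : Finset X, t.card = m ∧ F ⊆ ⋃ c ∈ t, Metric.closedBall c δ }

/-- The upper box-counting dimension of `F`. -/
noncomputable def dimBsup {X : Type*} [MetricSpace X] (F : Set X) : ℝ :=
  Filter.limsup (fun δ : ℝ => Real.log (coverNum F δ) / (-Real.log δ)) (nhdsWithin 0 (Set.Ioi 0))

/-!
The complement of `SemiRandom U (D / N)` is the union over rationals `0 ≤ q < D / N` of the sets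
`A_q` of points `x` with `H(x_n) < q n` for infinitely many `n`; this needs universality, which
bounds `H(x_n) / n` so that its `liminf` is meaningful. Within a unit cube, the points sharing a
prefix `x_n` lie in a set of diameter `≤ √N 2^(-⌊n/N⌋)`, and fewer than `2^⌈qn⌉` strings have
complexity `< qn`. So `A_q` is covered, for every `m`, by sets from stages `n ≥ m` whose
`D`-dimensional sizes sum to `≲ Σ_n (2^(q - D/N))^n < ∞`, and a Borel–Cantelli argument for
Hausdorff measure gives `μH[D] A_q = 0`. Measurability holds because `liminf H(α_n)/n` is a
`liminf` of functions of finitely many digits.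
-/

open Filter Topology MeasureTheory
open scoped NNReal

def selfDelimit (s : BStr) : BStr := List.replicate s.length true ++ false :: s

lemma length_selfDelimit (s : BStr) : (selfDelimit s).length = 2 * s.length + 1 := by
  simp [selfDelimit]; omega

lemma drop_selfDelimit (s : BStr) :
    (selfDelimit s).drop ((selfDelimit s).length / 2 + 1) = s := by
  rw [length_selfDelimit, show (2 * s.length + 1) / 2 = s.length by omega, selfDelimit,
    List.drop_append]
  simp

lemma eq_of_selfDelimit_isPrefix {s t : BStr} (h : selfDelimit s <+: selfDelimit t) :
    s = t := by
  have hle : s.length ≤ t.length := by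
    have := h.length_le; simp only [length_selfDelimit] at this; omega
  have hlen : s.length = t.length := by
    by_contra hne
    have hs : (selfDelimit s)[s.length]'(by simp [length_selfDelimit]; omega) = false := by
      simp [selfDelimit]
    have ht : (selfDelimit t)[s.length]'(by simp [length_selfDelimit]; omega) = true := by
      simp [selfDelimit, List.getElem_append_left
        (show s.length < (List.replicate t.length true).length by simp; omega)]
    have := h.getElem (i := s.length) (by simp [length_selfDelimit]; omega)
    rw [hs, ht] at this
    exact Bool.false_ne_true this
  rw [← drop_selfDelimit s, ← drop_selfDelimit t,
    h.eq_of_length (by simp [length_selfDelimit, hlen])]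

def decodeSelfDelimit (p : BStr) : Option BStr :=
  let s := p.drop (p.length / 2 + 1)
  if selfDelimit s = p then some s else none

lemma decodeSelfDelimit_eq_some_iff {p s : BStr} :
    decodeSelfDelimit p = some s ↔ selfDelimit s = p := by
  unfold decodeSelfDelimit
  constructor
  · intro h
    simp only [Option.ite_none_right_eq_some, Option.some.injEq] at h
    obtain ⟨hp, rfl⟩ := h
    exact hp
  · rintro rfl
    simp [drop_selfDelimit]

lemma primrec_selfDelimit : Primrec selfDelimit :=
  Primrec.list_append.comp
    (Primrec.list_map (Primrec.list_range.comp Primrec.list_length) (Primrec₂.const true) |>.of_eq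
      fun s => by simp [List.map_const'])
    (Primrec.list_cons.comp (Primrec.const false) Primrec.id)

lemma primrec_decodeSelfDelimit : Primrec decodeSelfDelimit := by
  have hdrop : Primrec fun p : BStr => p.drop (p.length / 2 + 1) :=
    Primrec.list_drop.comp
      (Primrec.succ.comp (Primrec.nat_div.comp Primrec.list_length (Primrec.const 2))) Primrec.id
  exact Primrec.ite (Primrec.eq.comp (primrec_selfDelimit.comp hdrop) Primrec.id)
    (Primrec.option_some.comp hdrop) (Primrec.const none)

noncomputable def selfDelimitingComputer : Computer where
  f p := decodeSelfDelimit p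
  partrec := Computable.ofOption primrec_decodeSelfDelimit.to_comp
  prefixFree := by
    intro p hp q hq hpq
    obtain ⟨s, hs⟩ := Part.dom_iff_mem.1 hp
    obtain ⟨t, ht⟩ := Part.dom_iff_mem.1 hq
    rw [Part.mem_ofOption, Option.mem_def, decodeSelfDelimit_eq_some_iff] at hs ht
    subst hs ht
    rw [eq_of_selfDelimit_isPrefix hpq]

lemma selfDelimitingComputer_f_selfDelimit (s : BStr) :
    selfDelimitingComputer.f (selfDelimit s) = Part.some s := by
  simp [selfDelimitingComputer, decodeSelfDelimit_eq_some_iff.2 rfl]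

section Complexity

variable {U : Computer}

lemma Kc_le_length {p s : BStr} (hp : U.f p = Part.some s) : Kc U s ≤ p.length :=
  Nat.sInf_le ⟨p, hp, rfl⟩

lemma exists_length_eq_Kc {s : BStr} (h : ∃ p, U.f p = Part.some s) :
    ∃ p, U.f p = Part.some s ∧ p.length = Kc U s :=
  Nat.sInf_mem (s := {k | ∃ p, U.f p = Part.some s ∧ p.length = k})
    (let ⟨p, hp⟩ := h; ⟨p.length, p, hp, rfl⟩)

lemma ncard_length_lt_lt (m : ℕ) : {p : BStr | p.length < m}.ncard < 2 ^ m := by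
  induction m with
  | zero => simp
  | succ m ih =>
    have hsplit : {p : BStr | p.length < m + 1} = {p | p.length < m} ∪ {p | p.length = m} := by
      ext p; simp [le_iff_lt_or_eq]
    have hcard : {p : BStr | p.length = m}.ncard = 2 ^ m := by
      rw [← Nat.card_coe_set_eq]
      exact (Nat.card_eq_fintype_card (α := List.Vector Bool m)).trans (by simp)
    rw [hsplit]
    have := Set.ncard_union_le {p : BStr | p.length < m} {p | p.length = m}
    omega

/- `hsurj` is essential: a string without a program has the junk complexity `sInf ∅ = 0`. -/
lemma finite_and_ncard_setOf_Kc_lt_lt (hsurj : ∀ s, ∃ p, U.f p = Part.some s) (m : ℕ) :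
    {s | Kc U s < m}.Finite ∧ {s | Kc U s < m}.ncard < 2 ^ m := by
  choose prog hprog using fun s => exists_length_eq_Kc (hsurj s)
  have hmaps : Set.MapsTo prog {s | Kc U s < m} {p | p.length < m} := fun s hs => by
    simpa [(hprog s).2] using hs
  have hinj : Set.InjOn prog {s | Kc U s < m} := fun s _ t _ hst =>
    Part.some_inj.1 (((hprog s).1.symm.trans (congrArg U.f hst)).trans (hprog t).1)
  have hfin : {p : BStr | p.length < m}.Finite := List.finite_length_lt Bool m
  exact ⟨hfin.of_injOn hmaps hinj,
    (Set.ncard_le_ncard_of_injOn prog hmaps hinj hfin).trans_lt (ncard_length_lt_lt m)⟩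

lemma tsum_const_Kc_lt_le (hsurj : ∀ s, ∃ p, U.f p = Part.some s) (m : ℕ) (a : ℝ≥0∞) :
    ∑' _ : {s // Kc U s < m}, a ≤ 2 ^ m * a := by
  obtain ⟨hfin, hcard⟩ := finite_and_ncard_setOf_Kc_lt_lt hsurj m
  have : Finite {s // Kc U s < m} := hfin.to_subtype
  rw [ENNReal.tsum_const, ENat.card_eq_coe_natCard]
  gcongr
  exact_mod_cast hcard.le

lemma IsUniversal.exists_length_le (hU : IsUniversal U) :
    ∃ c : ℕ, ∀ s, ∃ p, U.f p = Part.some s ∧ p.length ≤ 2 * s.length + c := by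
  obtain ⟨sim, hsim⟩ := hU selfDelimitingComputer
  refine ⟨sim + 1, fun s => ?_⟩
  obtain ⟨p, hp, hlen⟩ := hsim _ s (selfDelimitingComputer_f_selfDelimit s)
  exact ⟨p, hp, by rw [length_selfDelimit] at hlen; omega⟩

lemma IsUniversal.exists_program (hU : IsUniversal U) (s : BStr) : ∃ p, U.f p = Part.some s :=
  let ⟨_, hc⟩ := hU.exists_length_le
  let ⟨p, hp, _⟩ := hc s
  ⟨p, hp⟩

lemma IsUniversal.Kc_pre_div_le (hU : IsUniversal U) :
    ∃ C : ℝ, ∀ (α : ℕ → Bool) (n : ℕ), (Kc U (pre α n) : ℝ) / n ≤ C := by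
  obtain ⟨c, hc⟩ := hU.exists_length_le
  refine ⟨2 + c, fun α n => ?_⟩
  rcases Nat.eq_zero_or_pos n with rfl | hn
  · simp only [Nat.cast_zero, div_zero]; positivity
  obtain ⟨p, hp, hlen⟩ := hc (pre α n)
  have hK : (Kc U (pre α n) : ℝ) ≤ 2 * n + c := by
    exact_mod_cast (Kc_le_length hp).trans (by simpa [pre] using hlen)
  have hn1 : (1 : ℝ) ≤ n := by exact_mod_cast hn
  rw [div_le_iff₀ (by positivity)]
  nlinarith

lemma exists_rat_frequently_Kc_lt_of_not_semiRandom (hU : IsUniversal U) {d : ℝ}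
    {α : ℕ → Bool} (h : ¬ SemiRandom U d α) :
    ∃ q : ℚ, 0 ≤ (q : ℝ) ∧ (q : ℝ) < d ∧ ∃ᶠ n in atTop, (Kc U (pre α n) : ℝ) < q * n := by
  obtain ⟨C, hC⟩ := hU.Kc_pre_div_le
  have hcob : IsCoboundedUnder (· ≥ ·) atTop fun n => (Kc U (pre α n) : ℝ) / n :=
    (isBoundedUnder_of ⟨C, hC α⟩).isCoboundedUnder_ge
  have hpos : 0 ≤ liminf (fun n => (Kc U (pre α n) : ℝ) / n) atTop :=
    le_liminf_of_le hcob (Eventually.of_forall fun n => by positivity)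
  obtain ⟨q, hlt, hqd⟩ := exists_rat_btwn (not_le.1 h)
  refine ⟨q, hpos.trans hlt.le, hqd, ?_⟩
  refine ((frequently_lt_of_liminf_lt hcob hlt).and_eventually (eventually_gt_atTop 0)).mono ?_
  rintro n ⟨hn, hn0⟩
  exact (div_lt_iff₀ (by positivity)).1 hn

end Complexity

lemma pre_eq_ofFn (α : ℕ → Bool) (n : ℕ) : pre α n = List.ofFn fun j : Fin n => α j := by
  apply List.ext_getElem <;> simp [pre]

lemma measurable_comp_pre {β : Type*} [MeasurableSpace β] (f : BStr → β) (n : ℕ) :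
    Measurable fun α : ℕ → Bool => f (pre α n) := by
  simp_rw [pre_eq_ofFn]
  exact (measurable_of_countable fun w : Fin n → Bool => f (List.ofFn w)).comp
    (measurable_pi_lambda _ fun j => measurable_pi_apply _)

lemma measurableSet_setOf_semiRandom (U : Computer) (d : ℝ) :
    MeasurableSet {α : ℕ → Bool | SemiRandom U d α} :=
  measurableSet_le measurable_const
    (Measurable.liminf fun n => measurable_comp_pre (fun s => (Kc U s : ℝ) / n) n)

lemma measurable_binExp (n : ℕ) : Measurable (binExp · n) :=
  (measurable_from_top (f := fun z : ℤ => decide (z % 2 = 1))).comp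
    (Int.measurable_floor.comp (measurable_fract.mul_const _))

lemma measurable_codeSeq (N : ℕ) (hN : 0 < N) : Measurable (codeSeq N hN) :=
  measurable_pi_lambda _ fun _ => (measurable_binExp _).comp
    (EuclideanSpace.proj (𝕜 := ℝ) _).continuous.measurable

section Digits

lemma floor_two_mul {K : Type*} [Field K] [LinearOrder K] [IsStrictOrderedRing K] [FloorRing K]
    (t : K) : ⌊2 * t⌋ = 2 * ⌊t⌋ + ⌊2 * t⌋ % 2 := by
  have h : ⌊t⌋ = ⌊2 * t⌋ / 2 := by
    simpa using Int.floor_div_natCast (2 * t) 2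
  rw [h, Int.mul_ediv_add_emod]

lemma floor_fract_mul_two_pow_eq_of_binExp_eq {y y' : ℝ} {k : ℕ}
    (h : ∀ j < k, binExp y j = binExp y' j) :
    ⌊Int.fract y * 2 ^ k⌋ = ⌊Int.fract y' * 2 ^ k⌋ := by
  induction k with
  | zero => simp [Int.floor_fract]
  | succ k ih =>
    have hdigit : ⌊Int.fract y * 2 ^ (k + 1)⌋ % 2 = ⌊Int.fract y' * 2 ^ (k + 1)⌋ % 2 := by
      have := h k k.lt_succ_self
      simp only [binExp, decide_eq_decide] at this
      omega
    have hdouble (z : ℝ) : z * 2 ^ (k + 1) = 2 * (z * 2 ^ k) := by ring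
    rw [hdouble, hdouble] at hdigit ⊢
    rw [floor_two_mul, floor_two_mul (Int.fract y' * 2 ^ k), ih fun j hj => h j (by omega),
      hdigit]

lemma abs_fract_sub_fract_lt_of_binExp_eq {y y' : ℝ} {k : ℕ}
    (h : ∀ j < k, binExp y j = binExp y' j) : |Int.fract y - Int.fract y'| < 2⁻¹ ^ k := by
  have := Int.abs_sub_lt_one_of_floor_eq_floor (floor_fract_mul_two_pow_eq_of_binExp_eq h)
  rw [← sub_mul, abs_mul, abs_of_pos (by positivity : (0 : ℝ) < 2 ^ k)] at this
  rwa [inv_pow, ← one_div, lt_div_iff₀ (by positivity)]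

variable {N : ℕ} (hN : 0 < N)

lemma codeSeq_add_mul (x : EuclideanSpace ℝ (Fin N)) (i : Fin N) (j : ℕ) :
    codeSeq N hN x (i + j * N) = binExp (x i) j := by
  have hmod : (i + j * N) % N = i := by rw [Nat.add_mul_mod_self_right, Nat.mod_eq_of_lt i.isLt]
  have hdiv : (i + j * N) / N = j := by
    rw [Nat.add_mul_div_right _ _ hN, Nat.div_eq_of_lt i.isLt, zero_add]
  simp only [codeSeq, hmod, hdiv]

lemma apply_eq_of_pre_eq {α β : ℕ → Bool} {n m : ℕ} (h : pre α n = pre β n) (hm : m < n) :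
    α m = β m :=
  congrFun (List.ofFn_injective (by simpa only [pre_eq_ofFn] using h)) ⟨m, hm⟩

lemma binExp_eq_of_pre_codeSeq_eq {x y : EuclideanSpace ℝ (Fin N)} {n : ℕ}
    (h : pre (codeSeq N hN x) n = pre (codeSeq N hN y) n) (i : Fin N) {j : ℕ} (hj : j < n / N) :
    binExp (x i) j = binExp (y i) j := by
  have hlt : i + j * N < n := by
    have := (Nat.le_div_iff_mul_le hN).1 hj
    nlinarith [i.isLt]
  rw [← codeSeq_add_mul hN, ← codeSeq_add_mul hN, apply_eq_of_pre_eq h hlt]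

lemma edist_le_of_pre_codeSeq_eq {x y : EuclideanSpace ℝ (Fin N)} {n : ℕ}
    (hfloor : ∀ i, ⌊x i⌋ = ⌊y i⌋) (h : pre (codeSeq N hN x) n = pre (codeSeq N hN y) n) :
    edist x y ≤ ((N : ℝ≥0) ^ (2⁻¹ : ℝ) : ℝ≥0) * 2⁻¹ ^ (n / N) := by
  have hcoord (i : Fin N) : edist (x i) (y i) ≤ 2⁻¹ ^ (n / N) := by
    have hsub : x i - y i = Int.fract (x i) - Int.fract (y i) := by
      simp only [Int.fract, hfloor i]; ring
    rw [edist_dist, Real.dist_eq, hsub]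
    refine (ENNReal.ofReal_le_ofReal (abs_fract_sub_fract_lt_of_binExp_eq
      fun j hj => binExp_eq_of_pre_codeSeq_eq hN h i hj).le).trans_eq ?_
    rw [ENNReal.ofReal_pow (by norm_num), ENNReal.ofReal_inv_of_pos two_pos, ENNReal.ofReal_ofNat]
  calc edist x y
      ≤ ((Fintype.card (Fin N) : ℝ≥0) ^ (1 / (2 : ℝ≥0∞)).toReal : ℝ≥0) * edist x.ofLp y.ofLp :=
        PiLp.antilipschitzWith_ofLp 2 (fun _ : Fin N => ℝ) x y
    _ ≤ ((N : ℝ≥0) ^ (2⁻¹ : ℝ) : ℝ≥0) * 2⁻¹ ^ (n / N) := by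
        simp only [Fintype.card_fin, one_div, ENNReal.toReal_inv, ENNReal.toReal_ofNat]
        gcongr
        exact edist_pi_le_iff.2 hcoord

end Digits

section GeometricBound

variable {q D : ℝ}

lemma ceil_mul_sub_div_mul_le (hq : 0 ≤ q) (hD : 0 ≤ D) (N n : ℕ) :
    (⌈q * n⌉₊ : ℝ) - (n / N : ℕ) * D ≤ 1 + D + (q - D / N) * n := by
  have hceil : (⌈q * n⌉₊ : ℝ) < q * n + 1 := Nat.ceil_lt_add_one (by positivity)
  have hdiv : (n : ℝ) / N - 1 ≤ (n / N : ℕ) := by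
    have := Nat.sub_one_lt_floor ((n : ℝ) / N)
    rw [Nat.floor_div_eq_div] at this
    exact this.le
  have := mul_le_mul_of_nonneg_left hdiv hD
  have hring : (q - D / N) * n = q * n - D * (n / N) := by ring
  rw [hring]
  nlinarith

lemma two_pow_ceil_mul_mul_inv_two_pow_rpow_le (hq : 0 ≤ q) (hD : 0 ≤ D) (N n : ℕ) :
    (2 : ℝ≥0∞) ^ ⌈q * n⌉₊ * (2⁻¹ ^ (n / N)) ^ D ≤ 2 ^ (1 + D) * (2 ^ (q - D / N)) ^ n := by
  have hleft : (2 : ℝ≥0∞) ^ ⌈q * n⌉₊ * (2⁻¹ ^ (n / N)) ^ D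
      = 2 ^ ((⌈q * n⌉₊ : ℝ) - (n / N : ℕ) * D) := by
    rw [sub_eq_add_neg, ENNReal.rpow_add _ _ two_ne_zero ENNReal.ofNat_ne_top,
      ENNReal.rpow_natCast]
    congr 1
    rw [← ENNReal.inv_pow, ENNReal.inv_rpow, ← ENNReal.rpow_natCast, ← ENNReal.rpow_mul,
      ENNReal.rpow_neg]
  have hright : (2 : ℝ≥0∞) ^ (1 + D) * (2 ^ (q - D / N)) ^ n
      = 2 ^ (1 + D + (q - D / N) * n) := by
    rw [← ENNReal.rpow_natCast, ← ENNReal.rpow_mul,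
      ← ENNReal.rpow_add _ _ two_ne_zero ENNReal.ofNat_ne_top]
  rw [hleft, hright]
  exact ENNReal.rpow_le_rpow_of_exponent_le one_le_two (ceil_mul_sub_div_mul_le hq hD N n)

lemma tsum_two_pow_ceil_mul_mul_inv_two_pow_rpow_ne_top {N : ℕ} (hq : 0 ≤ q)
    (hqD : q < D / N) : ∑' n : ℕ, (2 : ℝ≥0∞) ^ ⌈q * n⌉₊ * (2⁻¹ ^ (n / N)) ^ D ≠ ∞ := by
  have hD : 0 ≤ D := by
    by_contra! hD
    linarith [div_nonpos_of_nonpos_of_nonneg hD.le (Nat.cast_nonneg N)]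
  have hratio : (2 : ℝ≥0∞) ^ (q - D / N) < 1 :=
    ENNReal.rpow_lt_one_of_one_lt_of_neg (by norm_num) (by linarith)
  refine ne_top_of_le_ne_top ?_ (ENNReal.tsum_le_tsum
    (two_pow_ceil_mul_mul_inv_two_pow_rpow_le hq hD N))
  rw [ENNReal.tsum_mul_left, ENNReal.tsum_geometric]
  exact ENNReal.mul_ne_top (ENNReal.rpow_ne_top_of_nonneg (by positivity) ENNReal.ofNat_ne_top)
    (ENNReal.inv_ne_top.2 (tsub_pos_of_lt hratio).ne')

end GeometricBound

/- A Borel–Cantelli lemma for Hausdorff measure: the tails of the covers are admissible covers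
of `s` of vanishing mesh whose `d`-dimensional sums tend to `0`. -/
theorem hausdorffMeasure_eq_zero_of_frequently_mem {X : Type*} [EMetricSpace X]
    [MeasurableSpace X] [BorelSpace X] {ι : ℕ → Type*} [∀ n, Countable (ι n)] {d : ℝ}
    {t : ∀ n, ι n → Set X} {r : ℕ → ℝ≥0∞} (hr : Tendsto r atTop (𝓝 0)) (hr_anti : Antitone r)
    (ht : ∀ n i, Metric.ediam (t n i) ≤ r n)
    (hsum : ∑' n, ∑' i, Metric.ediam (t n i) ^ d ≠ ∞) {s : Set X}
    (hs : ∀ x ∈ s, ∃ᶠ n in atTop, ∃ i, x ∈ t n i) : μH[d] s = 0 := by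
  let tail (m : ℕ) : (Σ n : {n // n ∉ Finset.range m}, ι n) → Set X := fun p => t p.1 p.2
  have hcover (m : ℕ) : s ⊆ ⋃ p, tail m p := fun x hx => by
    obtain ⟨n, hmn, i, hi⟩ := frequently_atTop.1 (hs x hx) m
    exact Set.mem_iUnion.2 ⟨⟨⟨n, by simpa using hmn⟩, i⟩, hi⟩
  have hdiam (m : ℕ) (p) : Metric.ediam (tail m p) ≤ r m :=
    (ht _ _).trans (hr_anti (by simpa using p.1.2))
  have htail : Tendsto (fun m => ∑' p, Metric.ediam (tail m p) ^ d) atTop (𝓝 0) := by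
    simp only [tail, ENNReal.tsum_sigma']
    exact (ENNReal.tendsto_tsum_compl_atTop_zero hsum).comp tendsto_finset_range
  refine le_antisymm ?_ zero_le
  calc μH[d] s ≤ liminf (fun m => ∑' p, Metric.ediam (tail m p) ^ d) atTop :=
        Measure.hausdorffMeasure_le_liminf_tsum d s r hr tail (.of_forall hdiam)
          (.of_forall hcover)
    _ = 0 := htail.liminf_eq

theorem hausdorffMeasure_setOf_frequently_Kc_lt_eq_zero {U : Computer}
    (hsurj : ∀ s, ∃ p, U.f p = Part.some s) {N : ℕ} (hN : 0 < N) {q D : ℝ} (hq : 0 ≤ q)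
    (hqD : q < D / N) :
    μH[D] {x : EuclideanSpace ℝ (Fin N) |
      ∃ᶠ n in atTop, (Kc U (pre (codeSeq N hN x) n) : ℝ) < q * n} = 0 := by
  set A := {x : EuclideanSpace ℝ (Fin N) |
    ∃ᶠ n in atTop, (Kc U (pre (codeSeq N hN x) n) : ℝ) < q * n}
  have hD : 0 ≤ D := ((div_pos_iff_of_pos_right (by exact_mod_cast hN)).1 (hq.trans_lt hqD)).le
  have hcubes : A ⊆ ⋃ v : Fin N → ℤ, A ∩ {x | ∀ i, ⌊x i⌋ = v i} := fun x hx =>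
    Set.mem_iUnion.2 ⟨fun i => ⌊x i⌋, hx, fun _ => rfl⟩
  refine measure_mono_null hcubes (measure_iUnion_null fun v => ?_)
  set C : ℝ≥0∞ := (((N : ℝ≥0) ^ (2⁻¹ : ℝ) : ℝ≥0) : ℝ≥0∞)
  let t (n : ℕ) (s : {s // Kc U s < ⌈q * n⌉₊}) : Set (EuclideanSpace ℝ (Fin N)) :=
    {x | (∀ i, ⌊x i⌋ = v i) ∧ pre (codeSeq N hN x) n = s}
  have ht (n : ℕ) (s) : Metric.ediam (t n s) ≤ C * 2⁻¹ ^ (n / N) :=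
    Metric.ediam_le fun x hx y hy => edist_le_of_pre_codeSeq_eq hN
      (fun i => (hx.1 i).trans (hy.1 i).symm) (hx.2.trans hy.2.symm)
  refine hausdorffMeasure_eq_zero_of_frequently_mem (t := t) (r := fun n => C * 2⁻¹ ^ (n / N))
    ?_ ?_ ht ?_ fun x hx => hx.1.mono fun n hn => ⟨⟨_, Nat.lt_ceil.2 hn⟩, hx.2, rfl⟩
  · have h := ENNReal.Tendsto.const_mul ((ENNReal.tendsto_pow_atTop_nhds_zero_of_lt_one
      (by norm_num : (2⁻¹ : ℝ≥0∞) < 1)).comp (Nat.tendsto_div_const_atTop hN.ne'))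
      (Or.inr ENNReal.coe_ne_top : (0 : ℝ≥0∞) ≠ 0 ∨ C ≠ ∞)
    simpa using h
  · exact fun m n hmn => mul_le_mul_right
      (pow_le_pow_right_of_le_one' (by norm_num) (Nat.div_le_div_right hmn)) C
  · refine ne_top_of_le_ne_top (ENNReal.mul_ne_top
      (ENNReal.rpow_ne_top_of_nonneg hD (ENNReal.coe_ne_top : C ≠ ∞))
      (tsum_two_pow_ceil_mul_mul_inv_two_pow_rpow_ne_top hq hqD)) ?_
    rw [← ENNReal.tsum_mul_left]
    refine ENNReal.tsum_le_tsum fun n => ?_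
    calc ∑' s, Metric.ediam (t n s) ^ D
        ≤ ∑' _ : {s // Kc U s < ⌈q * n⌉₊}, (C * 2⁻¹ ^ (n / N)) ^ D :=
          ENNReal.tsum_le_tsum fun s => ENNReal.rpow_le_rpow (ht n s) hD
      _ ≤ 2 ^ ⌈q * n⌉₊ * (C * 2⁻¹ ^ (n / N)) ^ D := tsum_const_Kc_lt_le hsurj _ _
      _ = C ^ D * (2 ^ ⌈q * n⌉₊ * (2⁻¹ ^ (n / N)) ^ D) := by
          rw [ENNReal.mul_rpow_of_nonneg _ _ hD]; ring

theorem hausdorffMeasure_nonSemiRandom_eq_zero_general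
    (U : Computer) (hU : IsUniversal U) (N : ℕ) (hN : 0 < N) (D : ℝ) :
    MeasurableSet {x : EuclideanSpace ℝ (Fin N) | ¬ SemiRandom U (D / N) (codeSeq N hN x)} ∧
    μH[D] {x : EuclideanSpace ℝ (Fin N) | ¬ SemiRandom U (D / N) (codeSeq N hN x)} = 0 := by
  refine ⟨(measurableSet_setOf_semiRandom U _).compl.preimage (measurable_codeSeq N hN), ?_⟩
  refine measure_mono_null (fun x hx => ?_) (measure_iUnion_null fun q : ℚ =>
    measure_iUnion_null fun hq : 0 ≤ (q : ℝ) ∧ (q : ℝ) < D / N =>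
      hausdorffMeasure_setOf_frequently_Kc_lt_eq_zero hU.exists_program hN hq.1 hq.2)
  obtain ⟨q, hq0, hqD, hfreq⟩ := exists_rat_frequently_Kc_lt_of_not_semiRandom hU hx
  exact Set.mem_iUnion₂.2 ⟨q, ⟨hq0, hqD⟩, hfreq⟩

/-- For any real `D ≥ 0`, the set of non semi `(D/N)`-random
points of `ℝ^N` is Borel and has zero `D`-dimensional Hausdorff measure. -/
theorem hausdorffMeasure_nonSemiRandom_eq_zero
    (U : Computer) (hU : IsUniversal U) (N : ℕ) (hN : 0 < N) (D : ℝ) (hD0 : 0 ≤ D) :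
    MeasurableSet {x : EuclideanSpace ℝ (Fin N) | ¬ SemiRandom U (D / N) (codeSeq N hN x)} ∧
    μH[D] {x : EuclideanSpace ℝ (Fin N) | ¬ SemiRandom U (D / N) (codeSeq N hN x)} = 0 :=
  hausdorffMeasure_nonSemiRandom_eq_zero_general U hU N hN D
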